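/- Let χ: ℝⁿ → ℝ be a kernel satisfying conditions (K1)–(K3) with respect to the node sequence Πⁿ. Then for every continuous and bounded function f: ℝⁿ → ℝ and every x ∈ ℝⁿ, the multivariate sampling Kantorovich operators converge pointwise: lim_{w→+∞} (S_w^χ f)(x) = f(x). -/

import Mathlib

open MeasureTheory Filter

noncomputable section

/-- The multivariate nodes `t_k = (t_{k_1}, …, t_{k_n})` built from a one-dimensional
node sequence `t : ℤ → ℝ`. -/
def nodes {n : ℕ} (t : ℤ → ℝ) (k : Fin n → ℤ) : EuclideanSpace ℝ (Fin n) :=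
  WithLp.toLp 2 (fun i => t (k i))

/-- The plurirectangle `R_k^w = ∏_i [t_{k_i}/w, t_{k_i+1}/w]`. -/
def cell {n : ℕ} (t : ℤ → ℝ) (w : ℝ) (k : Fin n → ℤ) : Set (EuclideanSpace ℝ (Fin n)) :=
  WithLp.ofLp ⁻¹' Set.univ.pi fun i => Set.Icc (t (k i) / w) (t (k i + 1) / w)

/-- The multivariate sampling Kantorovich operator
`(S_w^χ f)(x) = ∑_k χ(wx − t_k) · (wⁿ/A_k) ∫_{R_k^w} f`. -/
def SK {n : ℕ} (t : ℤ → ℝ) (χ : EuclideanSpace ℝ (Fin n) → ℝ) (w : ℝ)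
    (f : EuclideanSpace ℝ (Fin n) → ℝ) (x : EuclideanSpace ℝ (Fin n)) : ℝ :=
  ∑' k : Fin n → ℤ,
    χ (w • x - nodes t k) *
      ((w ^ n / ∏ i, (t (k i + 1) - t (k i))) * ∫ u in cell t w k, f u)

/-- The node sequence `Π = (t_k)` is strictly increasing, diverges at `±∞`, and has gaps
between `δ` and `Δ`. -/
structure IsNodeSeq (t : ℤ → ℝ) (δ Δ : ℝ) : Prop where
  strictMono : StrictMono t
  tendsto_atTop : Tendsto t atTop atTop
  tendsto_atBot : Tendsto t atBot atBot
  delta_pos : 0 < δ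
  Delta_pos : 0 < Δ
  gap_lower : ∀ k : ℤ, δ ≤ t (k + 1) - t k
  gap_upper : ∀ k : ℤ, t (k + 1) - t k ≤ Δ

/-- The kernel conditions (K1)–(K3) for `χ : ℝⁿ → ℝ` with respect to the nodes `Πⁿ`. -/
structure IsKernel {n : ℕ} (t : ℤ → ℝ) (χ : EuclideanSpace ℝ (Fin n) → ℝ) : Prop where
  /-- (K1): `χ ∈ L¹(ℝⁿ)`. -/
  integrable : Integrable χ
  /-- (K1): `χ` is bounded in a neighbourhood of the origin. -/
  bounded_near_zero : ∃ ε > (0 : ℝ), ∃ M : ℝ,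
    ∀ x : EuclideanSpace ℝ (Fin n), ‖x‖ < ε → |χ x| ≤ M
  /-- (K2): `∑_k χ(u − t_k) = 1` for every `u`. -/
  partition_of_unity : ∀ u : EuclideanSpace ℝ (Fin n),
    ∑' k : Fin n → ℤ, χ (u - nodes t k) = 1
  /-- (K3): the absolute discrete moment of some order `β > 0` is finite. -/
  moment : ∃ β > (0 : ℝ),
    (∀ u : EuclideanSpace ℝ (Fin n),
        Summable fun k : Fin n → ℤ => |χ (u - nodes t k)| * ‖u - nodes t k‖ ^ β) ∧
      ∃ M : ℝ, ∀ u : EuclideanSpace ℝ (Fin n),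
        (∑' k : Fin n → ℤ, |χ (u - nodes t k)| * ‖u - nodes t k‖ ^ β) ≤ M



lemma gap_nat {t : ℤ → ℝ} {δ : ℝ} (hδ : ∀ k : ℤ, δ ≤ t (k + 1) - t k) :
    ∀ (a : ℤ) (j : ℕ), δ * j ≤ t (a + j) - t a := by
  intro a j
  induction j with
  | zero => simp
  | succ j ih =>
    have h := hδ (a + j)
    have he : ((a : ℤ) + (j + 1 : ℕ)) = (a + j) + 1 := by push_cast; ring
    rw [he]; push_cast; push_cast at ih; nlinarith

lemma gap_mul {t : ℤ → ℝ} {δ : ℝ} (hδ : ∀ k : ℤ, δ ≤ t (k + 1) - t k) :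
    ∀ a b : ℤ, a ≤ b → δ * (b - a) ≤ t b - t a := by
  intro a b hab
  have h := gap_nat hδ a (b - a).toNat
  rw [show (a + ((b - a).toNat : ℤ)) = b by omega] at h
  have he : (((b - a).toNat : ℕ) : ℝ) = (b : ℝ) - a := by
    have : (((b - a).toNat : ℕ) : ℤ) = b - a := by omega
    exact_mod_cast congrArg (Int.cast : ℤ → ℝ) this
  rw [he] at h; exact h

lemma gap_abs {t : ℤ → ℝ} {δ : ℝ} (hδpos : 0 < δ) (hδ : ∀ k : ℤ, δ ≤ t (k + 1) - t k)
    (a b : ℤ) : δ * |(b : ℝ) - (a : ℝ)| ≤ |t b - t a| := by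
  rcases le_total a b with h | h
  · have h1 := gap_mul hδ a b h
    have h2 : (0:ℝ) ≤ (b:ℝ) - a := by exact_mod_cast sub_nonneg.mpr (Int.cast_le.mpr h)
    rw [abs_of_nonneg h2, abs_of_nonneg (by nlinarith)]
    exact h1
  · have h1 := gap_mul hδ b a h
    have h2 : (0:ℝ) ≤ (a:ℝ) - b := by exact_mod_cast sub_nonneg.mpr (Int.cast_le.mpr h)
    rw [abs_sub_comm, abs_sub_comm (t b), abs_of_nonneg h2, abs_of_nonneg (by nlinarith)]
    exact h1

lemma node_count {t : ℤ → ℝ} {δ : ℝ} (hδpos : 0 < δ) (hδ : ∀ k : ℤ, δ ≤ t (k + 1) - t k)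
    (r : ℝ) (c : ℝ) :
    ∃ s : Finset ℤ, {m : ℤ | |c - t m| < r} ⊆ ↑s ∧ s.card ≤ 2 * (⌈2 * r / δ⌉₊ + 1) + 1 := by
  by_cases hne : {m : ℤ | |c - t m| < r}.Nonempty
  · obtain ⟨m₀, hm₀⟩ := hne
    set b : ℤ := ((⌈2 * r / δ⌉₊ : ℤ) + 1) with hbdef
    refine ⟨Finset.Icc (m₀ - b) (m₀ + b), ?_, ?_⟩
    · intro m hm
      simp only [Set.mem_setOf_eq] at hm hm₀
      simp only [Finset.coe_Icc, Set.mem_Icc]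
      have hdij : |t m - t m₀| < 2 * r := by
        calc |t m - t m₀| ≤ |t m - c| + |c - t m₀| := abs_sub_le _ _ _
          _ < 2 * r := by rw [abs_sub_comm]; linarith
      have h1 := gap_abs hδpos hδ m₀ m
      have h2 : |(m:ℝ) - (m₀:ℝ)| < 2 * r / δ := by
        rw [lt_div_iff₀ hδpos]
        nlinarith [abs_nonneg ((m:ℝ) - m₀)]
      have h3 : |(m:ℝ) - (m₀:ℝ)| < (b : ℝ) := by
        refine h2.trans_le ?_
        have := Nat.le_ceil (2 * r / δ)
        rw [hbdef]; push_cast; linarith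
      have h4 : |m - m₀| ≤ b := by
        have : (|m - m₀| : ℝ) < (b:ℝ) := by push_cast; exact h3
        exact_mod_cast this.le
      rw [abs_le] at h4
      omega
    · rw [Int.card_Icc]; omega
  · exact ⟨∅, by simp [Set.not_nonempty_iff_eq_empty.mp hne], by positivity⟩

lemma coord_le_norm {n : ℕ} (v : EuclideanSpace ℝ (Fin n)) (i : Fin n) : |v i| ≤ ‖v‖ := by
  rw [EuclideanSpace.norm_eq, ← Real.sqrt_sq_eq_abs]
  apply Real.sqrt_le_sqrt
  calc v i ^ 2 = ‖v i‖ ^ 2 := by rw [Real.norm_eq_abs, sq_abs]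
    _ ≤ ∑ j, ‖v j‖ ^ 2 := Finset.single_le_sum (f := fun j => ‖v j‖ ^ 2) (fun j _ => by positivity) (Finset.mem_univ i)

lemma norm_le_card_mul {n : ℕ} (v : EuclideanSpace ℝ (Fin n)) (C : ℝ) (hC : 0 ≤ C)
    (h : ∀ i, |v i| ≤ C) : ‖v‖ ≤ Real.sqrt n * C := by
  rw [EuclideanSpace.norm_eq]
  have hrw : Real.sqrt n * C = Real.sqrt ((n : ℝ) * C ^ 2) := by
    rw [Real.sqrt_mul (by positivity), Real.sqrt_sq hC]
  rw [hrw]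
  apply Real.sqrt_le_sqrt
  calc ∑ i, ‖v i‖ ^ 2 ≤ ∑ _i : Fin n, C ^ 2 := by
        apply Finset.sum_le_sum; intro i _
        have := h i; rw [Real.norm_eq_abs]; nlinarith [abs_nonneg (v i)]
    _ = n * C ^ 2 := by simp [Finset.sum_const]

/-- finite order-zero moment, uniformly in `u` -/
lemma m0_bound {n : ℕ} (t : ℤ → ℝ) (δ : ℝ) (hδpos : 0 < δ)
    (hδ : ∀ k : ℤ, δ ≤ t (k + 1) - t k)
    (χ : EuclideanSpace ℝ (Fin n) → ℝ)
    (ε : ℝ) (hε : 0 < ε) (M : ℝ) (hM : ∀ x : EuclideanSpace ℝ (Fin n), ‖x‖ < ε → |χ x| ≤ M)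
    (β : ℝ) (hβ : 0 < β)
    (hsum : ∀ u : EuclideanSpace ℝ (Fin n),
      Summable fun k : Fin n → ℤ => |χ (u - (nodes t k))| * ‖u - (nodes t k)‖ ^ β)
    (Mβ : ℝ) (hMβ : ∀ u : EuclideanSpace ℝ (Fin n),
      (∑' k : Fin n → ℤ, |χ (u - (nodes t k))| * ‖u - (nodes t k)‖ ^ β) ≤ Mβ) :
    ∃ K₀ : ℝ, 0 ≤ K₀ ∧ ∀ u : EuclideanSpace ℝ (Fin n),
      (Summable fun k : Fin n → ℤ => |χ (u - (nodes t k))|) ∧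
      (∑' k : Fin n → ℤ, |χ (u - (nodes t k))|) ≤ K₀ := by
  set N : ℕ := 2 * (⌈2 * ε / δ⌉₊ + 1) + 1 with hN
  set M' : ℝ := max M 0 with hM'
  have hMβ0 : 0 ≤ Mβ := by
    have h0 := hMβ 0
    refine le_trans ?_ h0
    exact tsum_nonneg fun k => by positivity
  refine ⟨M' * N ^ n + Mβ / ε ^ β, by positivity, fun u => ?_⟩
  -- finite covering of the near indices
  choose s hs hscard using fun i : Fin n => node_count hδpos hδ ε (u i)
  set S : Finset (Fin n → ℤ) := Fintype.piFinset s with hS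
  have hnear : ∀ k : Fin n → ℤ, ‖u - (nodes t k)‖ < ε → k ∈ S := by
    intro k hk
    rw [hS, Fintype.mem_piFinset]
    intro i
    have : |u i - t (k i)| < ε :=
      lt_of_le_of_lt (by simpa [nodes] using coord_le_norm (u - nodes t k) i) hk
    exact hs i this
  -- pointwise domination
  set g : (Fin n → ℤ) → ℝ := fun k =>
    Set.indicator (↑S) (fun _ => M') k
      + |χ (u - (nodes t k))| * ‖u - (nodes t k)‖ ^ β / ε ^ β with hg
  have hdom : ∀ k, |χ (u - (nodes t k))| ≤ g k := by
    intro k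
    rw [hg]
    by_cases hk : ‖u - (nodes t k)‖ < ε
    · have h1 : Set.indicator (↑S) (fun _ => M') k = M' := Set.indicator_of_mem (hnear k hk) _
      have h2 : |χ (u - (nodes t k))| ≤ M' := le_trans (hM _ hk) (le_max_left _ _)
      have h3 : (0:ℝ) ≤ |χ (u - (nodes t k))| * ‖u - (nodes t k)‖ ^ β / ε ^ β := by
        positivity
      simp only [h1]; linarith
    · push_neg at hk
      have h1 : (0:ℝ) ≤ Set.indicator (↑S) (fun _ => M') k := by
        apply Set.indicator_nonneg; intro _ _; rw [hM']; exact le_max_right _ _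
      have h2 : ε ^ β ≤ ‖u - (nodes t k)‖ ^ β :=
        Real.rpow_le_rpow hε.le hk hβ.le
      have h3 : |χ (u - (nodes t k))| * 1
          ≤ |χ (u - (nodes t k))| * (‖u - (nodes t k)‖ ^ β / ε ^ β) := by
        apply mul_le_mul_of_nonneg_left _ (abs_nonneg _)
        rw [le_div_iff₀ (by positivity)]
        simpa using h2
      have h4 : |χ (u - (nodes t k))|
          ≤ |χ (u - (nodes t k))| * ‖u - (nodes t k)‖ ^ β / ε ^ β := by
        calc |χ (u - (nodes t k))| = |χ (u - (nodes t k))| * 1 := by ring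
          _ ≤ |χ (u - (nodes t k))| * (‖u - (nodes t k)‖ ^ β / ε ^ β) := h3
          _ = |χ (u - (nodes t k))| * ‖u - (nodes t k)‖ ^ β / ε ^ β := by ring
      linarith
  -- summability of the dominating function
  have hsum1 : Summable (fun k : Fin n → ℤ => Set.indicator (↑S) (fun _ => M') k) := by
    apply summable_of_ne_finset_zero (s := S)
    intro k hk
    exact Set.indicator_of_notMem (by simpa using hk) _
  have hsum2 : Summable (fun k : Fin n → ℤ =>
      |χ (u - (nodes t k))| * ‖u - (nodes t k)‖ ^ β / ε ^ β) := by
    simpa [div_eq_mul_inv] using (hsum u).mul_right (ε ^ β)⁻¹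
  have hgsum : Summable g := hsum1.add hsum2
  have habs : Summable fun k : Fin n → ℤ => |χ (u - (nodes t k))| :=
    Summable.of_nonneg_of_le (fun k => abs_nonneg _) hdom hgsum
  refine ⟨habs, ?_⟩
  have step1 : (∑' k : Fin n → ℤ, |χ (u - (nodes t k))|) ≤ ∑' k, g k :=
    Summable.tsum_le_tsum hdom habs hgsum
  have step2 : (∑' k, g k)
      = (∑' k : Fin n → ℤ, Set.indicator (↑S) (fun _ => M') k)
        + ∑' k : Fin n → ℤ, |χ (u - (nodes t k))| * ‖u - (nodes t k)‖ ^ β / ε ^ β :=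
    Summable.tsum_add hsum1 hsum2
  have step3 : (∑' k : Fin n → ℤ, Set.indicator (↑S) (fun _ => M') k) ≤ M' * N ^ n := by
    rw [tsum_eq_sum (s := S) (fun k hk => Set.indicator_of_notMem (by simpa using hk) _)]
    have hcard : S.card ≤ N ^ n := by
      rw [hS, Fintype.card_piFinset]
      calc ∏ i, (s i).card ≤ ∏ _i : Fin n, N := Finset.prod_le_prod (fun _ _ => Nat.zero_le _)
            (fun i _ => hscard i)
        _ = N ^ n := by simp [Finset.prod_const]
    calc (∑ k ∈ S, Set.indicator (↑S) (fun _ => M') k) = ∑ k ∈ S, M' := by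
          apply Finset.sum_congr rfl
          intro k hk; exact Set.indicator_of_mem (by simpa using hk) _
      _ = S.card * M' := by rw [Finset.sum_const]; simp [mul_comm]
      _ ≤ (N ^ n : ℕ) * M' := by
          apply mul_le_mul_of_nonneg_right _ (le_max_right M 0)
          exact_mod_cast hcard
      _ = M' * N ^ n := by push_cast; ring
  have step4 : (∑' k : Fin n → ℤ, |χ (u - (nodes t k))| * ‖u - (nodes t k)‖ ^ β / ε ^ β)
      ≤ Mβ / ε ^ β := by
    rw [tsum_div_const]
    exact div_le_div_of_nonneg_right (hMβ u) (by positivity) |>.trans_eq rfl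
  linarith

lemma cell_volume {n : ℕ} (t : ℤ → ℝ) {δ Δ : ℝ} (ht : IsNodeSeq t δ Δ) {w : ℝ} (hw : 0 < w)
    (k : Fin n → ℤ) :
    volume (cell t w k) = ENNReal.ofReal ((∏ i, (t (k i + 1) - t (k i))) / w ^ n) := by
  have h := (EuclideanSpace.volume_preserving_symm_measurableEquiv_toLp (Fin n)).measure_preimage
    (s := Set.univ.pi fun i => Set.Icc (t (k i) / w) (t (k i + 1) / w))
    ((MeasurableSet.univ_pi fun i => measurableSet_Icc).nullMeasurableSet)
  have hid : ((MeasurableEquiv.toLp 2 (Fin n → ℝ)).symm ⁻¹'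
      (Set.univ.pi fun i => Set.Icc (t (k i) / w) (t (k i + 1) / w))) = cell t w k := rfl
  rw [hid] at h
  rw [h, volume_pi_pi]
  simp only [Real.volume_Icc]
  rw [← ENNReal.ofReal_prod_of_nonneg (fun i _ => by
    have h1 : t (k i) < t (k i + 1) := ht.strictMono (by omega)
    have : t (k i) / w ≤ t (k i + 1) / w := by
      apply div_le_div_of_nonneg_right h1.le hw.le |>.trans_eq rfl
    linarith)]
  congr 1
  have hterm : ∀ i ∈ Finset.univ, t (k i + 1) / w - t (k i) / w = (t (k i + 1) - t (k i)) / w :=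
    fun i _ => by ring
  rw [Finset.prod_congr rfl hterm, Finset.prod_div_distrib]
  simp [Finset.prod_const]

lemma cell_isCompact {n : ℕ} (t : ℤ → ℝ) (w : ℝ) (k : Fin n → ℤ) :
    IsCompact (cell t w k) :=
  (PiLp.homeomorph 2 _).isCompact_preimage.mpr (isCompact_univ_pi fun i => isCompact_Icc)

lemma prod_gap_pos {n : ℕ} {t : ℤ → ℝ} {δ Δ : ℝ} (ht : IsNodeSeq t δ Δ) (k : Fin n → ℤ) :
    0 < ∏ i, (t (k i + 1) - t (k i)) :=
  Finset.prod_pos fun i _ => by have := ht.gap_lower (k i); linarith [ht.delta_pos]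

/-- the weighted average of `f` over the cell deviates from `c` by at most `η`,
provided `f` is within `η` of `c` on the cell. -/
lemma avg_est {n : ℕ} (t : ℤ → ℝ) {δ Δ : ℝ} (ht : IsNodeSeq t δ Δ) {w : ℝ} (hw : 0 < w)
    (k : Fin n → ℤ) (f : EuclideanSpace ℝ (Fin n) → ℝ) (hf_cont : Continuous f)
    (c η : ℝ) (hη : ∀ u ∈ cell t w k, |f u - c| ≤ η) :
    |(w ^ n / ∏ i, (t (k i + 1) - t (k i))) * (∫ u in cell t w k, f u) - c| ≤ η := by
  set A := ∏ i, (t (k i + 1) - t (k i)) with hA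
  have hApos : 0 < A := prod_gap_pos ht k
  have hwn : (0:ℝ) < w ^ n := by positivity
  have hvol : volume (cell t w k) = ENNReal.ofReal (A / w ^ n) := cell_volume t ht hw k
  have hvolR : (volume (cell t w k)).toReal = A / w ^ n := by
    rw [hvol, ENNReal.toReal_ofReal (by positivity)]
  have hvolfin : volume (cell t w k) < ⊤ := by rw [hvol]; exact ENNReal.ofReal_lt_top
  have hint : IntegrableOn f (cell t w k) := 
    hf_cont.continuousOn.integrableOn_compact (cell_isCompact t w k)
  have hintc : IntegrableOn (fun _ => c) (cell t w k) := integrableOn_const hvolfin.ne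
  have hcint : ∫ u in cell t w k, (c : ℝ) = (A / w ^ n) * c := by
    rw [setIntegral_const, measureReal_def, hvolR, smul_eq_mul]
  have key : (w ^ n / A) * (∫ u in cell t w k, f u) - c
      = (w ^ n / A) * ∫ u in cell t w k, (f u - c) := by
    rw [integral_sub hint hintc, hcint]
    field_simp
  rw [key, abs_mul, abs_of_nonneg (by positivity : (0:ℝ) ≤ w ^ n / A)]
  have hb : ‖∫ u in cell t w k, (f u - c)‖ ≤ η * (volume (cell t w k)).toReal := by
    apply norm_setIntegral_le_of_norm_le_const hvolfin
    · intro u hu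
      rw [Real.norm_eq_abs]
      exact hη u hu
  rw [Real.norm_eq_abs] at hb
  calc (w ^ n / A) * |∫ u in cell t w k, (f u - c)| ≤ (w ^ n / A) * (η * (A / w ^ n)) := by
        apply mul_le_mul_of_nonneg_left _ (by positivity)
        rw [hvolR] at hb; exact hb
    _ = η := by field_simp

/-- Pointwise convergence of the multivariate sampling Kantorovich operators for
continuous and bounded functions: `lim_{w→+∞} (S_w^χ f)(x) = f(x)`. -/
theorem sk_pointwise_convergence {n : ℕ} (t : ℤ → ℝ) (δ Δ : ℝ) (ht : IsNodeSeq t δ Δ)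
    (χ : EuclideanSpace ℝ (Fin n) → ℝ) (hχ : IsKernel t χ)
    (f : EuclideanSpace ℝ (Fin n) → ℝ) (hf_cont : Continuous f)
    (hf_bdd : ∃ M : ℝ, ∀ x : EuclideanSpace ℝ (Fin n), |f x| ≤ M)
    (x : EuclideanSpace ℝ (Fin n)) :
    Tendsto (fun w : ℝ => SK t χ w f x) atTop (nhds (f x)) := by
  obtain ⟨ε₀, hε₀, M, hM⟩ := hχ.bounded_near_zero
  obtain ⟨β, hβ, hsumβ, Mβ, hMβ⟩ := hχ.moment
  obtain ⟨K₀, hK₀, hm0⟩ := m0_bound t δ ht.delta_pos ht.gap_lower χ ε₀ hε₀ M hM β hβ hsumβ Mβ hMβ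
  obtain ⟨Mf, hMf⟩ := hf_bdd
  have hMf0 : 0 ≤ Mf := (abs_nonneg _).trans (hMf x)
  have hMβ0 : 0 ≤ Mβ := le_trans (tsum_nonneg fun k => by positivity) (hMβ 0)
  rw [Metric.tendsto_nhds]
  intro ε hε
  set ε' : ℝ := ε / (2 * (K₀ + 1)) with hε'def
  have hε' : 0 < ε' := by rw [hε'def]; positivity
  obtain ⟨γ, hγ, hγf⟩ := Metric.continuousAt_iff.mp (hf_cont.continuousAt (x := x)) ε' hε'
  -- eventually facts
  have ev1 : ∀ᶠ w : ℝ in atTop, (0:ℝ) < w := eventually_gt_atTop 0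
  have ev2 : ∀ᶠ w : ℝ in atTop, Real.sqrt n * Δ / w < γ / 2 := by
    have h := Tendsto.div_atTop (f := fun _ : ℝ => Real.sqrt n * Δ) (l := atTop)
      tendsto_const_nhds tendsto_id
    exact h.eventually_lt_const (by positivity)
  have ev3 : ∀ᶠ w : ℝ in atTop, 2 * Mf * Mβ / (w * (γ / 2)) ^ β < ε / 2 := by
    have hmul : Tendsto (fun w : ℝ => w * (γ / 2)) atTop atTop :=
      Tendsto.atTop_mul_const (by positivity) tendsto_id
    have hpow : Tendsto (fun w : ℝ => (w * (γ / 2)) ^ β) atTop atTop :=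
      (tendsto_rpow_atTop hβ).comp hmul
    have h := Tendsto.div_atTop (f := fun _ : ℝ => 2 * Mf * Mβ) (l := atTop)
      tendsto_const_nhds hpow
    exact h.eventually_lt_const (by positivity)
  filter_upwards [ev1, ev2, ev3] with w hw hw2 hw3
  rw [Real.dist_eq]
  -- notation
  set u₀ : EuclideanSpace ℝ (Fin n) := w • x with hu₀
  set a : (Fin n → ℤ) → ℝ := fun k => |χ (u₀ - nodes t k)| with ha
  obtain ⟨hasum, hatsum⟩ := hm0 u₀
  set R : ℝ := w * (γ / 2) with hR
  have hRpos : 0 < R := by positivity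
  set avg : (Fin n → ℤ) → ℝ :=
    fun k => (w ^ n / ∏ i, (t (k i + 1) - t (k i))) * ∫ u in cell t w k, f u with havg
  -- |avg k| ≤ Mf
  have havgb : ∀ k, |avg k| ≤ Mf := by
    intro k
    have := avg_est t ht hw k f hf_cont 0 Mf (fun u _ => by simpa using hMf u)
    simpa only [sub_zero] using this
  -- near cells: average close to f x
  have hnear : ∀ k : Fin n → ℤ, ‖u₀ - nodes t k‖ ≤ R → |avg k - f x| ≤ ε' := by
    intro k hk
    apply avg_est t ht hw k f hf_cont (f x) ε'
    intro u hu
    have hcoord : ∀ i, |u i - (w⁻¹ • nodes t k : EuclideanSpace ℝ (Fin n)) i| ≤ Δ / w := by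
      intro i
      have hui := Set.mem_univ_pi.mp (Set.mem_preimage.mp hu) i
      simp only [Set.mem_Icc] at hui
      have hgap : t (k i + 1) - t (k i) ≤ Δ := ht.gap_upper (k i)
      have hdiv : t (k i + 1) / w - t (k i) / w ≤ Δ / w := by
        rw [div_sub_div_same]
        exact div_le_div_of_nonneg_right hgap hw.le
      have hsm : (w⁻¹ • nodes t k : EuclideanSpace ℝ (Fin n)) i = t (k i) / w := by
        show w⁻¹ * t (k i) = t (k i) / w
        ring
      rw [hsm, abs_le]
      constructor <;> [linarith [div_le_div_of_nonneg_right (le_refl (t (k i))) hw.le]; linarith]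
    have h1 : ‖u - w⁻¹ • nodes t k‖ ≤ Real.sqrt n * (Δ / w) :=
      norm_le_card_mul _ _ (div_nonneg ht.Delta_pos.le hw.le) hcoord
    have h2 : ‖(w⁻¹ • nodes t k : EuclideanSpace ℝ (Fin n)) - x‖ = ‖u₀ - nodes t k‖ / w := by
      have hx : (w⁻¹ • nodes t k : EuclideanSpace ℝ (Fin n)) - x = w⁻¹ • (nodes t k - u₀) := by
        rw [smul_sub, hu₀, smul_smul, inv_mul_cancel₀ hw.ne', one_smul]
      rw [hx, norm_smul, norm_sub_rev, Real.norm_eq_abs, abs_of_pos (inv_pos.mpr hw)]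
      ring
    have hney : dist u x < γ := by
      rw [dist_eq_norm]
      calc ‖u - x‖ ≤ ‖u - w⁻¹ • nodes t k‖ + ‖(w⁻¹ • nodes t k : EuclideanSpace ℝ (Fin n)) - x‖ := by
            have := dist_triangle u (w⁻¹ • nodes t k) x
            simpa [dist_eq_norm] using this
        _ ≤ Real.sqrt n * (Δ / w) + ‖u₀ - nodes t k‖ / w := by rw [h2]; linarith
        _ ≤ Real.sqrt n * Δ / w + R / w := by
            have : ‖u₀ - nodes t k‖ / w ≤ R / w := div_le_div_of_nonneg_right hk hw.le
            rw [mul_div_assoc]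
            linarith
        _ < γ / 2 + γ / 2 := by
            have hRw : R / w = γ / 2 := by rw [hR]; field_simp
            rw [hRw]
            linarith
        _ = γ := by ring
    have := hγf hney
    rw [Real.dist_eq] at this
    exact this.le
  -- pointwise bound for the series
  have hpt : ∀ k : Fin n → ℤ,
      |χ (u₀ - nodes t k) * avg k - χ (u₀ - nodes t k) * f x|
        ≤ ε' * a k + (2 * Mf / R ^ β) * (a k * ‖u₀ - nodes t k‖ ^ β) := by
    intro k
    have hfactor : |χ (u₀ - nodes t k) * avg k - χ (u₀ - nodes t k) * f x|
        = a k * |avg k - f x| := by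
      have he : χ (u₀ - nodes t k) * avg k - χ (u₀ - nodes t k) * f x
          = χ (u₀ - nodes t k) * (avg k - f x) := by ring
      rw [he, abs_mul, ha]
    rw [hfactor]
    by_cases hk : ‖u₀ - nodes t k‖ ≤ R
    · have h1 : a k * |avg k - f x| ≤ a k * ε' :=
        mul_le_mul_of_nonneg_left (hnear k hk) (abs_nonneg _)
      have h2 : (0:ℝ) ≤ (2 * Mf / R ^ β) * (a k * ‖u₀ - nodes t k‖ ^ β) := by positivity
      nlinarith [abs_nonneg (χ (u₀ - nodes t k))]
    · push_neg at hk
      have hRβ : R ^ β ≤ ‖u₀ - nodes t k‖ ^ β := Real.rpow_le_rpow hRpos.le hk.le hβ.le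
      have h1 : |avg k - f x| ≤ 2 * Mf := by
        have := havgb k
        have h2 := hMf x
        calc |avg k - f x| ≤ |avg k| + |f x| := abs_sub _ _
          _ ≤ 2 * Mf := by linarith
      have h2 : a k * |avg k - f x| ≤ a k * (2 * Mf) :=
        mul_le_mul_of_nonneg_left h1 (abs_nonneg _)
      have h3 : a k * (2 * Mf) ≤ (2 * Mf / R ^ β) * (a k * ‖u₀ - nodes t k‖ ^ β) := by
        rw [div_mul_eq_mul_div, le_div_iff₀ (by positivity)]
        have : a k * R ^ β ≤ a k * ‖u₀ - nodes t k‖ ^ β :=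
          mul_le_mul_of_nonneg_left hRβ (abs_nonneg _)
        nlinarith [abs_nonneg (χ (u₀ - nodes t k)), Real.rpow_nonneg hRpos.le β]
      have h4 : (0:ℝ) ≤ ε' * a k := by positivity
      linarith
  -- summability
  have hsummand : Summable fun k : Fin n → ℤ => χ (u₀ - nodes t k) * avg k := by
    apply Summable.of_abs
    apply Summable.of_nonneg_of_le (fun k => abs_nonneg _) (fun k => ?_) (hasum.mul_right Mf)
    rw [abs_mul]
    exact mul_le_mul_of_nonneg_left (havgb k) (abs_nonneg _)
  have hsummand2 : Summable fun k : Fin n → ℤ => χ (u₀ - nodes t k) * f x :=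
    (hasum.of_abs).mul_right (f x)
  have hrhs : Summable fun k : Fin n → ℤ =>
      ε' * a k + (2 * Mf / R ^ β) * (a k * ‖u₀ - nodes t k‖ ^ β) :=
    (hasum.mul_left ε').add ((hsumβ u₀).mul_left (2 * Mf / R ^ β))
  have hlhs_abs : Summable fun k : Fin n → ℤ =>
      |χ (u₀ - nodes t k) * avg k - χ (u₀ - nodes t k) * f x| :=
    Summable.of_nonneg_of_le (fun k => abs_nonneg _) hpt hrhs
  -- the identity SK - f x = tsum of differences
  have hfx : f x = ∑' k : Fin n → ℤ, χ (u₀ - nodes t k) * f x := by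
    rw [tsum_mul_right, hχ.partition_of_unity u₀, one_mul]
  have hdiff : SK t χ w f x - f x
      = ∑' k : Fin n → ℤ, (χ (u₀ - nodes t k) * avg k - χ (u₀ - nodes t k) * f x) := by
    rw [Summable.tsum_sub hsummand hsummand2]
    congr 1
  -- final estimate
  rw [hdiff]
  calc |∑' k : Fin n → ℤ, (χ (u₀ - nodes t k) * avg k - χ (u₀ - nodes t k) * f x)|
      ≤ ∑' k : Fin n → ℤ, |χ (u₀ - nodes t k) * avg k - χ (u₀ - nodes t k) * f x| := by
        have := norm_tsum_le_tsum_norm (f := fun k : Fin n → ℤ =>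
          χ (u₀ - nodes t k) * avg k - χ (u₀ - nodes t k) * f x) (by simpa using hlhs_abs)
        simpa using this
    _ ≤ ∑' k : Fin n → ℤ, (ε' * a k + (2 * Mf / R ^ β) * (a k * ‖u₀ - nodes t k‖ ^ β)) :=
        Summable.tsum_le_tsum hpt hlhs_abs hrhs
    _ = ε' * (∑' k, a k) + (2 * Mf / R ^ β) * ∑' k, (a k * ‖u₀ - nodes t k‖ ^ β) := by
        rw [Summable.tsum_add (hasum.mul_left ε') ((hsumβ u₀).mul_left (2 * Mf / R ^ β)),
          tsum_mul_left, tsum_mul_left]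
    _ ≤ ε' * K₀ + (2 * Mf / R ^ β) * Mβ := by
        have h1 : ε' * (∑' k, a k) ≤ ε' * K₀ := mul_le_mul_of_nonneg_left hatsum hε'.le
        have h2 : (2 * Mf / R ^ β) * ∑' k, (a k * ‖u₀ - nodes t k‖ ^ β)
            ≤ (2 * Mf / R ^ β) * Mβ :=
          mul_le_mul_of_nonneg_left (hMβ u₀) (by positivity)
        linarith
    _ < ε := by
        have h1 : ε' * K₀ < ε / 2 := by
          rw [hε'def]
          rw [div_mul_eq_mul_div, div_lt_iff₀ (by positivity)]
          nlinarith
        have h2 : (2 * Mf / R ^ β) * Mβ < ε / 2 := by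
          rw [hR]
          calc 2 * Mf / (w * (γ / 2)) ^ β * Mβ = 2 * Mf * Mβ / (w * (γ / 2)) ^ β := by ring
            _ < ε / 2 := hw3
        linarith
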